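/- arXiv:math/0611298 — 2 statements merged into one kernel-verified Lean document; each statement's English description precedes it below -/
import Mathlib

section
/- Let h : ℝⁿ → ℝ be Lipschitz with constant C. Then lim_{t→0⁺} ∫_{ℝⁿ} (|x−y|²/(4t) − n/2) · e^{−|x−y|²/(4t)}/(4πt)^{n/2} · (h(y) − h(x)) dy = 0 for every x ∈ ℝⁿ. -/
/-!
Writing `K_t` for the kernel, `K_t(w) = t^{-n/2} K_1(w / √t)`, so the first absolute moment
`∫ |K_t(w)| ‖w‖ dw` equals `√t` times that of `K_1`, which is finite by Gaussian decay. As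
`|h(y) - h(x)| ≤ C ‖x - y‖`, the pairing is at most `C` times this moment, i.e. `O(√t)`.
-/

open MeasureTheory Real Filter Topology Module

section GaussianMoments

variable {E : Type*} [NormedAddCommGroup E] [NormedSpace ℝ E] [FiniteDimensional ℝ E]
  [MeasurableSpace E] [BorelSpace E] (μ : Measure E) [μ.IsAddHaarMeasure]

theorem integrable_norm_pow_mul_exp_neg_mul_norm_sq (k : ℕ) {b : ℝ} (hb : 0 < b) :
    Integrable (fun z : E => ‖z‖ ^ k * exp (-b * ‖z‖ ^ 2)) μ := by
  rcases subsingleton_or_nontrivial E with hE | hE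
  · have hconst : (fun z : E => ‖z‖ ^ k * exp (-b * ‖z‖ ^ 2)) =
        fun _ => ‖(0 : E)‖ ^ k * exp (-b * ‖(0 : E)‖ ^ 2) :=
      funext fun z => by rw [Subsingleton.elim z 0]
    rw [hconst]
    exact integrable_const _
  · rw [integrable_fun_norm_addHaar μ (f := fun r => r ^ k * exp (-b * r ^ 2))]
    refine (integrableOn_rpow_mul_exp_neg_mul_sq hb (s := (finrank ℝ E - 1 + k : ℕ))
      (neg_one_lt_zero.trans_le (Nat.cast_nonneg _))).congr_fun (fun r _ => ?_) measurableSet_Ioi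
    simp only [rpow_natCast, pow_add, smul_eq_mul]
    ring

end GaussianMoments

section LipschitzPairing

variable {E : Type*} [NormedAddCommGroup E] [MeasurableSpace E] [MeasurableAdd E]
  [MeasurableNeg E] (μ : Measure E) [μ.IsAddLeftInvariant] [μ.IsNegInvariant]

theorem abs_integral_mul_lipschitz_sub_le {k : E → ℝ}
    (hk : Integrable (fun w => |k w| * ‖w‖) μ) {C : NNReal} {h : E → ℝ} (hh : LipschitzWith C h)
    (x : E) :
    |∫ y, k (x - y) * (h y - h x) ∂μ| ≤ C * ∫ w, |k w| * ‖w‖ ∂μ := by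
  have hpointwise (y : E) : ‖k (x - y) * (h y - h x)‖ ≤ C * (|k (x - y)| * ‖x - y‖) := by
    have hlip : |h y - h x| ≤ C * ‖x - y‖ := by
      simpa [Real.dist_eq, dist_eq_norm, norm_sub_rev y x] using hh.dist_le_mul y x
    rw [norm_mul, norm_eq_abs, norm_eq_abs, mul_left_comm]
    gcongr
  calc |∫ y, k (x - y) * (h y - h x) ∂μ|
      ≤ ∫ y, C * (|k (x - y)| * ‖x - y‖) ∂μ :=
        norm_integral_le_of_norm_le ((hk.comp_sub_left x).const_mul C) (ae_of_all _ hpointwise)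
    _ = C * ∫ w, |k w| * ‖w‖ ∂μ := by
        rw [integral_const_mul, integral_sub_left_eq_self (fun w => |k w| * ‖w‖) μ x]

end LipschitzPairing

section HeatKernel

variable {E : Type*} [NormedAddCommGroup E] [NormedSpace ℝ E]

/-- `t ∂ₜ` of the heat kernel `(4πt)^{-d/2} e^{-‖w‖²/4t}`, where `d = finrank ℝ E`. -/
noncomputable def signedHeatKernel (t : ℝ) (w : E) : ℝ :=
  (‖w‖ ^ 2 / (4 * t) - (finrank ℝ E : ℝ) / 2) *
    (exp (-‖w‖ ^ 2 / (4 * t)) / (4 * π * t) ^ ((finrank ℝ E : ℝ) / 2))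

theorem signedHeatKernel_eq_smul {t : ℝ} (ht : 0 < t) (w : E) :
    signedHeatKernel t w = (√t ^ finrank ℝ E)⁻¹ * signedHeatKernel 1 ((√t)⁻¹ • w) := by
  have hnorm : ‖(√t)⁻¹ • w‖ ^ 2 = ‖w‖ ^ 2 / t := by
    rw [norm_smul, mul_pow, norm_inv, norm_of_nonneg (sqrt_nonneg t), inv_pow, sq_sqrt ht.le,
      inv_mul_eq_div]
  have hpow : (4 * π * t) ^ ((finrank ℝ E : ℝ) / 2) =
      (4 * π) ^ ((finrank ℝ E : ℝ) / 2) * √t ^ finrank ℝ E := by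
    rw [mul_rpow (by positivity) ht.le, sqrt_eq_rpow, ← rpow_natCast, ← rpow_mul ht.le]
    ring_nf
  simp only [signedHeatKernel, hnorm, hpow, mul_one]
  field_simp

variable [FiniteDimensional ℝ E] [MeasurableSpace E] [BorelSpace E]
  (μ : Measure E) [μ.IsAddHaarMeasure]

theorem integrable_abs_signedHeatKernel_mul_norm {t : ℝ} (ht : 0 < t) :
    Integrable (fun w : E => |signedHeatKernel t w| * ‖w‖) μ := by
  set d : ℝ := (4 * π * t) ^ ((finrank ℝ E : ℝ) / 2)
  have hd : 0 < d := by positivity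
  have hb : 0 < 1 / (4 * t) := by positivity
  refine Integrable.mono'
    (((integrable_norm_pow_mul_exp_neg_mul_norm_sq μ 3 hb).const_mul (1 / (4 * t * d))).add
      ((integrable_norm_pow_mul_exp_neg_mul_norm_sq μ 1 hb).const_mul (finrank ℝ E / (2 * d))))
    (Continuous.aestronglyMeasurable (by unfold signedHeatKernel; fun_prop))
    (ae_of_all _ fun w => ?_)
  have hexp : exp (-(1 / (4 * t)) * ‖w‖ ^ 2) = exp (-‖w‖ ^ 2 / (4 * t)) := by ring_nf
  have hfactor : |‖w‖ ^ 2 / (4 * t) - (finrank ℝ E : ℝ) / 2| ≤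
      ‖w‖ ^ 2 / (4 * t) + (finrank ℝ E : ℝ) / 2 :=
    (abs_sub _ _).trans_eq (by rw [abs_of_nonneg (by positivity), abs_of_nonneg (by positivity)])
  rw [norm_of_nonneg (by positivity), Pi.add_apply, hexp, signedHeatKernel, abs_mul,
    abs_of_pos (a := exp _ / d) (by positivity)]
  calc _ ≤ (‖w‖ ^ 2 / (4 * t) + (finrank ℝ E : ℝ) / 2) *
        (exp (-‖w‖ ^ 2 / (4 * t)) / d) * ‖w‖ := by gcongr
    _ = _ := by field_simp

theorem integral_abs_signedHeatKernel_mul_norm {t : ℝ} (ht : 0 < t) :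
    ∫ w, |signedHeatKernel t w| * ‖w‖ ∂μ = √t * ∫ w, |signedHeatKernel 1 w| * ‖w‖ ∂μ := by
  have hsqrt : 0 < √t := sqrt_pos.2 ht
  have hscale (w : E) : |signedHeatKernel t w| * ‖w‖ =
      (√t ^ finrank ℝ E)⁻¹ * √t * (|signedHeatKernel 1 ((√t)⁻¹ • w)| * ‖(√t)⁻¹ • w‖) := by
    rw [signedHeatKernel_eq_smul ht, abs_mul, abs_of_pos (by positivity), norm_smul, norm_inv,
      norm_of_nonneg hsqrt.le]
    field_simp
  simp_rw [hscale]
  rw [integral_const_mul, Measure.integral_comp_inv_smul_of_nonneg μ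
    (fun w => |signedHeatKernel 1 w| * ‖w‖) hsqrt.le, smul_eq_mul]
  field_simp

theorem tendsto_integral_abs_signedHeatKernel_mul_norm :
    Tendsto (fun t => ∫ w, |signedHeatKernel t w| * ‖w‖ ∂μ) (𝓝[>] 0) (𝓝 0) := by
  have hsqrt : Tendsto (fun t => √t * ∫ w, |signedHeatKernel 1 w| * ‖w‖ ∂μ) (𝓝[>] 0) (𝓝 0) := by
    simpa using ((continuous_sqrt.tendsto 0).mul_const _).mono_left nhdsWithin_le_nhds
  refine hsqrt.congr' ?_
  filter_upwards [self_mem_nhdsWithin] with t ht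
  exact (integral_abs_signedHeatKernel_mul_norm μ ht).symm

end HeatKernel

theorem kernel_pairing_lipschitz_vanishes (n : ℕ) (C : NNReal)
    (h : EuclideanSpace ℝ (Fin n) → ℝ) (hh : LipschitzWith C h)
    (x : EuclideanSpace ℝ (Fin n)) :
    Filter.Tendsto (fun t : ℝ =>
      ∫ y : EuclideanSpace ℝ (Fin n),
        (‖x - y‖ ^ 2 / (4 * t) - (n : ℝ) / 2) *
          (Real.exp (-‖x - y‖ ^ 2 / (4 * t)) / (4 * Real.pi * t) ^ ((n : ℝ) / 2)) *
          (h y - h x))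
      (nhdsWithin 0 (Set.Ioi 0)) (nhds 0) := by
  have hmoment := (tendsto_integral_abs_signedHeatKernel_mul_norm
    (volume : Measure (EuclideanSpace ℝ (Fin n)))).const_mul (C : ℝ)
  rw [mul_zero] at hmoment
  refine squeeze_zero_norm' ?_ hmoment
  filter_upwards [self_mem_nhdsWithin] with t ht
  simpa [signedHeatKernel, finrank_euclideanSpace] using abs_integral_mul_lipschitz_sub_le volume
    (integrable_abs_signedHeatKernel_mul_norm volume ht) hh x
end

section
/- Let u : ℝⁿ × (0,T) → (0,∞) solve the heat equation, f = −log u − (n/2)log(4πt), and P := t(2Δf − |∇f|²)u. Then (Δ − ∂ₜ)P = 2t·u·|Hess f − I/(2t)|² + u(|∇f|² − n/(2t)) in flat ℝⁿ. -/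
open Filter

variable {G : Type*} [NormedAddCommGroup G] [NormedSpace ℝ G]

noncomputable def dd (w : G) (φ : G → ℝ) (p : G) : ℝ := fderiv ℝ φ p w

theorem dd_congr {w : G} {φ ψ : G → ℝ} {p : G} (h : φ =ᶠ[nhds p] ψ) :
    dd w φ p = dd w ψ p := by
  rw [dd, dd, h.fderiv_eq]

theorem dd_contDiff {w : G} {φ : G → ℝ} (h : ContDiff ℝ (⊤ : ℕ∞) φ) : ContDiff ℝ (⊤ : ℕ∞) (dd w φ) := by
  have h1 : ContDiff ℝ (⊤ : ℕ∞) (fderiv ℝ φ) := h.fderiv_right (by simp)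
  exact (ContinuousLinearMap.apply ℝ ℝ w).contDiff.comp h1

theorem dd_contDiffAt {w : G} {φ : G → ℝ} {p : G} (h : ContDiffAt ℝ (⊤ : ℕ∞) φ p) :
    ContDiffAt ℝ (⊤ : ℕ∞) (dd w φ) p := by
  have h1 : ContDiffAt ℝ (⊤ : ℕ∞) (fderiv ℝ φ) p := h.fderiv_right (by simp)
  exact ((ContinuousLinearMap.apply ℝ ℝ w).contDiff.contDiffAt).comp p h1

theorem dd_comm {w w' : G} {φ : G → ℝ} {p : G} (h : ContDiffAt ℝ (⊤ : ℕ∞) φ p) :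
    dd w (dd w' φ) p = dd w' (dd w φ) p := by
  have hs : IsSymmSndFDerivAt ℝ φ p := h.isSymmSndFDerivAt (by rw [minSmoothness_of_isRCLikeNormedField]; exact WithTop.coe_le_coe.mpr le_top)
  have hd : DifferentiableAt ℝ (fderiv ℝ φ) p := (h.fderiv_right (m := (⊤ : ℕ∞)) ((by simp))).differentiableAt (by simp)
  have e : ∀ v v' : G, dd v (dd v' φ) p = fderiv ℝ (fderiv ℝ φ) p v v' := by
    intro v v'
    have : dd v' φ = fun q => ((ContinuousLinearMap.apply ℝ ℝ v') : (G →L[ℝ] ℝ) →L[ℝ] ℝ) (fderiv ℝ φ q) := rfl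
    rw [dd, this, show (fun q => ((ContinuousLinearMap.apply ℝ ℝ v') : (G →L[ℝ] ℝ) →L[ℝ] ℝ) (fderiv ℝ φ q)) = ((ContinuousLinearMap.apply ℝ ℝ v') : (G →L[ℝ] ℝ) →L[ℝ] ℝ) ∘ (fderiv ℝ φ) from rfl,
      fderiv_comp _ (ContinuousLinearMap.apply ℝ ℝ v').differentiableAt hd]
    simp [dd]
  rw [e, e, hs w w']

theorem dd_hasFDerivAt {w : G} {φ : G → ℝ} {p : G} {φ' : G →L[ℝ] ℝ}
    (h : HasFDerivAt φ φ' p) : dd w φ p = φ' w := by rw [dd, h.fderiv]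

theorem dd_add {w : G} {φ ψ : G → ℝ} {p : G} (hφ : DifferentiableAt ℝ φ p)
    (hψ : DifferentiableAt ℝ ψ p) :
    dd w (fun q => φ q + ψ q) p = dd w φ p + dd w ψ p := by
  rw [dd_hasFDerivAt (hφ.hasFDerivAt.fun_add hψ.hasFDerivAt)]; rfl

theorem dd_sub {w : G} {φ ψ : G → ℝ} {p : G} (hφ : DifferentiableAt ℝ φ p)
    (hψ : DifferentiableAt ℝ ψ p) :
    dd w (fun q => φ q - ψ q) p = dd w φ p - dd w ψ p := by
  rw [dd_hasFDerivAt (hφ.hasFDerivAt.fun_sub hψ.hasFDerivAt)]; rfl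

theorem dd_neg {w : G} {φ : G → ℝ} {p : G} :
    dd w (fun q => -φ q) p = -dd w φ p := by
  rw [dd, dd, fderiv_fun_neg]; rfl

theorem dd_const {w : G} {c : ℝ} {p : G} : dd w (fun _ => c) p = 0 := by
  rw [dd, fderiv_fun_const]; rfl

theorem dd_mul {w : G} {φ ψ : G → ℝ} {p : G} (hφ : DifferentiableAt ℝ φ p)
    (hψ : DifferentiableAt ℝ ψ p) :
    dd w (fun q => φ q * ψ q) p = dd w φ p * ψ p + φ p * dd w ψ p := by
  rw [dd_hasFDerivAt (hφ.hasFDerivAt.fun_mul hψ.hasFDerivAt)]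
  simp [dd]; ring

theorem dd_const_mul {w : G} {φ : G → ℝ} {c : ℝ} {p : G} (hφ : DifferentiableAt ℝ φ p) :
    dd w (fun q => c * φ q) p = c * dd w φ p := by
  rw [dd_hasFDerivAt (hφ.hasFDerivAt.const_mul c)]; simp [dd]

theorem dd_sq {w : G} {φ : G → ℝ} {p : G} (hφ : DifferentiableAt ℝ φ p) :
    dd w (fun q => φ q ^ 2) p = 2 * φ p * dd w φ p := by
  have h := dd_mul (w := w) hφ hφ
  have e : (fun q => φ q * φ q) = fun q => φ q ^ 2 := by funext q; ring
  rw [e] at h; rw [h]; ring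

theorem dd_inv {w : G} {φ : G → ℝ} {p : G} (hφ : DifferentiableAt ℝ φ p) (h0 : φ p ≠ 0) :
    dd w (fun q => (φ q)⁻¹) p = -(φ p ^ 2)⁻¹ * dd w φ p := by
  have h := (hasDerivAt_inv h0).comp_hasFDerivAt p hφ.hasFDerivAt
  have h2 : HasFDerivAt (fun q => (φ q)⁻¹) (-(φ p ^ 2)⁻¹ • fderiv ℝ φ p) p := h
  rw [dd_hasFDerivAt h2]; simp [dd]

theorem dd_log {w : G} {φ : G → ℝ} {p : G} (hφ : DifferentiableAt ℝ φ p) (h0 : φ p ≠ 0) :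
    dd w (fun q => Real.log (φ q)) p = (φ p)⁻¹ * dd w φ p := by
  rw [dd_hasFDerivAt (hφ.hasFDerivAt.log h0)]; simp [dd]

theorem dd_finset_sum {ι : Type*} (s : Finset ι) {w : G} {φ : ι → G → ℝ} {p : G}
    (hφ : ∀ i ∈ s, DifferentiableAt ℝ (φ i) p) :
    dd w (fun q => ∑ i ∈ s, φ i q) p = ∑ i ∈ s, dd w (φ i) p := by
  rw [dd_hasFDerivAt (HasFDerivAt.fun_sum (fun i hi => (hφ i hi).hasFDerivAt))]
  simp [dd]

noncomputable def pdi {n : ℕ} (i : Fin n) (f : EuclideanSpace ℝ (Fin n) → ℝ)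
    (x : EuclideanSpace ℝ (Fin n)) : ℝ :=
  fderiv ℝ f x (EuclideanSpace.single i 1)

noncomputable def lap {n : ℕ} (f : EuclideanSpace ℝ (Fin n) → ℝ)
    (x : EuclideanSpace ℝ (Fin n)) : ℝ :=
  ∑ i, pdi i (pdi i f) x

noncomputable def gradSq {n : ℕ} (f : EuclideanSpace ℝ (Fin n) → ℝ)
    (x : EuclideanSpace ℝ (Fin n)) : ℝ :=
  ∑ i, (pdi i f x) ^ 2

section Trans

variable {n : ℕ}
local notation "E" => EuclideanSpace ℝ (Fin n)

theorem curry_pdi {φ : ℝ × E → ℝ} {t : ℝ} {x : E} (hφ : DifferentiableAt ℝ φ (t,x)) (i : Fin n) :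
    pdi i (fun y => φ (t,y)) x = dd ((0:ℝ), EuclideanSpace.single i 1) φ (t,x) := by
  have hL : HasFDerivAt (fun y : E => (t,y))
      (((0 : E →L[ℝ] ℝ)).prod (ContinuousLinearMap.id ℝ E)) x :=
    HasFDerivAt.prodMk (hasFDerivAt_const t x) (hasFDerivAt_id x)
  have h := hφ.hasFDerivAt.comp x hL
  have h2 : HasFDerivAt (fun y : E => φ (t,y))
      ((fderiv ℝ φ (t,x)).comp (((0 : E →L[ℝ] ℝ)).prod (ContinuousLinearMap.id ℝ E))) x := h
  rw [pdi, h2.fderiv]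
  simp [dd]

theorem curry_deriv {φ : ℝ × E → ℝ} {t : ℝ} {x : E} (hφ : DifferentiableAt ℝ φ (t,x)) :
    deriv (fun s => φ (s,x)) t = dd ((1:ℝ), (0:E)) φ (t,x) := by
  have hL : HasDerivAt (fun s : ℝ => (s,x)) ((1:ℝ), (0:E)) t := by
    simpa using HasDerivAt.prodMk (hasDerivAt_id t) (hasDerivAt_const t x)
  have h := hφ.hasFDerivAt.comp_hasDerivAt t hL
  exact h.deriv

end Trans

section Helpers
variable {n : ℕ}

noncomputable def wv (n : ℕ) (i : Fin n) : ℝ × EuclideanSpace ℝ (Fin n) := ((0:ℝ), EuclideanSpace.single i 1)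
def ev (n : ℕ) : ℝ × EuclideanSpace ℝ (Fin n) := ((1:ℝ), 0)

noncomputable def Vf (U : ℝ × EuclideanSpace ℝ (Fin n) → ℝ) (i : Fin n) := dd (wv n i) U
noncomputable def Wf (U : ℝ × EuclideanSpace ℝ (Fin n) → ℝ) (i j : Fin n) := dd (wv n i) (Vf U j)
noncomputable def Lf (U : ℝ × EuclideanSpace ℝ (Fin n) → ℝ) :
    ℝ × EuclideanSpace ℝ (Fin n) → ℝ := fun q => ∑ j, Wf U j j q
noncomputable def gf (U : ℝ × EuclideanSpace ℝ (Fin n) → ℝ) :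
    ℝ × EuclideanSpace ℝ (Fin n) → ℝ := fun q => ∑ i, (Vf U i q) ^ 2
noncomputable def Qf (U : ℝ × EuclideanSpace ℝ (Fin n) → ℝ) :
    ℝ × EuclideanSpace ℝ (Fin n) → ℝ :=
  fun q => q.1 * (-2 * Lf U q + gf U q * (U q)⁻¹)

variable {U : ℝ × EuclideanSpace ℝ (Fin n) → ℝ}


theorem Vf_contDiff (hUc : ContDiff ℝ (⊤ : ℕ∞) U) (i : Fin n) : ContDiff ℝ (⊤ : ℕ∞) (Vf U i) := dd_contDiff hUc
theorem Wf_contDiff (hUc : ContDiff ℝ (⊤ : ℕ∞) U) (i j : Fin n) : ContDiff ℝ (⊤ : ℕ∞) (Wf U i j) := dd_contDiff (Vf_contDiff hUc j)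
theorem Lf_contDiff (hUc : ContDiff ℝ (⊤ : ℕ∞) U) : ContDiff ℝ (⊤ : ℕ∞) (Lf U) := by
  have : ∀ j : Fin n, ContDiff ℝ (⊤ : ℕ∞) (Wf U j j) := fun j => Wf_contDiff hUc j j
  exact ContDiff.sum fun j _ => this j
theorem gf_contDiff (hUc : ContDiff ℝ (⊤ : ℕ∞) U) : ContDiff ℝ (⊤ : ℕ∞) (gf U) := by
  exact ContDiff.sum fun i _ => (Vf_contDiff hUc i).pow 2
theorem Qf_contDiffAt (hUc : ContDiff ℝ (⊤ : ℕ∞) U) {q : ℝ × EuclideanSpace ℝ (Fin n)} (hq : U q ≠ 0) :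
    ContDiffAt ℝ (⊤ : ℕ∞) (Qf U) q := by
  have h1 : ContDiffAt ℝ (⊤ : ℕ∞) (fun p : ℝ × EuclideanSpace ℝ (Fin n) => p.1) q :=
    contDiff_fst.contDiffAt
  exact h1.mul (((contDiffAt_const (c := (-2:ℝ))).mul (Lf_contDiff hUc).contDiffAt).add
    (((gf_contDiff hUc).contDiffAt).mul (hUc.contDiffAt.inv hq)))

end Helpers

section Comp
variable {n : ℕ} {U : ℝ × EuclideanSpace ℝ (Fin n) → ℝ}

theorem Wf_symm (hUc : ContDiff ℝ (⊤ : ℕ∞) U) (i j : Fin n) : Wf U i j = Wf U j i := by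
  funext q
  exact dd_comm hUc.contDiffAt

theorem dd_fst {w q : ℝ × EuclideanSpace ℝ (Fin n)} :
    dd w (fun p : ℝ × EuclideanSpace ℝ (Fin n) => p.1) q = w.1 := by
  rw [dd_hasFDerivAt (hasFDerivAt_fst (p := q))]; rfl

theorem dd_gf (hUc : ContDiff ℝ (⊤ : ℕ∞) U) (w q : ℝ × EuclideanSpace ℝ (Fin n)) :
    dd w (gf U) q = ∑ i, 2 * Vf U i q * dd w (Vf U i) q := by
  unfold gf; rw [dd_finset_sum _ (fun i _ => ((Vf_contDiff hUc i).differentiable (by simp) q).fun_pow 2)]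
  exact Finset.sum_congr rfl fun i _ =>
    dd_sq ((Vf_contDiff hUc i).differentiable (by simp) q)

theorem dd_Lf (hUc : ContDiff ℝ (⊤ : ℕ∞) U) (w q : ℝ × EuclideanSpace ℝ (Fin n)) :
    dd w (Lf U) q = ∑ j, dd w (Wf U j j) q := by
  unfold Lf; rw [dd_finset_sum _ (fun j _ => (Wf_contDiff hUc j j).differentiable (by simp) q)]

theorem dd_Qf (hUc : ContDiff ℝ (⊤ : ℕ∞) U) (w : ℝ × EuclideanSpace ℝ (Fin n))
    {q : ℝ × EuclideanSpace ℝ (Fin n)} (hq : U q ≠ 0) :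
    dd w (Qf U) q = w.1 * (-2 * Lf U q + gf U q * (U q)⁻¹)
      + q.1 * (-2 * dd w (Lf U) q + (dd w (gf U) q * (U q)⁻¹
          + gf U q * (-(U q ^ 2)⁻¹ * dd w U q))) := by
  have hL := (Lf_contDiff hUc).differentiable (by simp)
  have hg := (gf_contDiff hUc).differentiable (by simp)
  have hU := hUc.differentiable (by simp)
  have hinv : DifferentiableAt ℝ (fun q => (U q)⁻¹) q := (hU q).inv hq
  have hB : DifferentiableAt ℝ (fun q => -2 * Lf U q + gf U q * (U q)⁻¹) q :=
    (((hL q).const_mul (-2)).add ((hg q).mul hinv))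
  unfold Qf; rw [dd_mul differentiableAt_fst hB, dd_fst,
    dd_add ((hL q).const_mul (-2)) ((hg q).fun_mul hinv),
    dd_const_mul (hL q), dd_mul (hg q) hinv, dd_inv (hU q) hq]

end Comp

section Comp2
open Set
variable {n : ℕ} {U : ℝ × EuclideanSpace ℝ (Fin n) → ℝ}

noncomputable def Af (U : ℝ × EuclideanSpace ℝ (Fin n) → ℝ) (j : Fin n) :
    ℝ × EuclideanSpace ℝ (Fin n) → ℝ := fun q => ∑ i, 2 * Vf U i q * Wf U j i q

noncomputable def Rf (U : ℝ × EuclideanSpace ℝ (Fin n) → ℝ) (j : Fin n) :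
    ℝ × EuclideanSpace ℝ (Fin n) → ℝ := fun q =>
  q.1 * (-2 * dd (wv n j) (Lf U) q + (Af U j q * (U q)⁻¹
    + gf U q * (-(U q ^ 2)⁻¹ * Vf U j q)))

theorem dd_wv_U (j : Fin n) : dd (wv n j) U = Vf U j := rfl
theorem dd_wv_Vf (i j : Fin n) : dd (wv n j) (Vf U i) = Wf U j i := rfl

theorem Af_contDiff (hUc : ContDiff ℝ (⊤ : ℕ∞) U) (j : Fin n) : ContDiff ℝ (⊤ : ℕ∞) (Af U j) :=
  ContDiff.sum fun i _ => (contDiff_const.mul (Vf_contDiff hUc i)).mul (Wf_contDiff hUc j i)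

theorem dd_Af (hUc : ContDiff ℝ (⊤ : ℕ∞) U) (j : Fin n) (w q : ℝ × EuclideanSpace ℝ (Fin n)) :
    dd w (Af U j) q = ∑ i, 2 * (dd w (Vf U i) q * Wf U j i q + Vf U i q * dd w (Wf U j i) q) := by
  unfold Af
  rw [dd_finset_sum _ (fun i _ => ((((Vf_contDiff hUc i).differentiable (by simp) q).const_mul 2)).fun_mul
    ((Wf_contDiff hUc j i).differentiable (by simp) q))]
  refine Finset.sum_congr rfl fun i _ => ?_
  rw [show (fun q => 2 * Vf U i q * Wf U j i q) = (fun q => (2 * Vf U i q) * Wf U j i q) from rfl,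
    dd_mul (((Vf_contDiff hUc i).differentiable (by simp) q).const_mul 2)
      ((Wf_contDiff hUc j i).differentiable (by simp) q),
    dd_const_mul ((Vf_contDiff hUc i).differentiable (by simp) q)]
  ring

theorem dd_gf_spatial (hUc : ContDiff ℝ (⊤ : ℕ∞) U) (j : Fin n) (q : ℝ × EuclideanSpace ℝ (Fin n)) :
    dd (wv n j) (gf U) q = Af U j q := by
  rw [dd_gf hUc]
  exact Finset.sum_congr rfl fun i _ => rfl

theorem dd_Qf_spatial (hUc : ContDiff ℝ (⊤ : ℕ∞) U) (j : Fin n)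
    {q : ℝ × EuclideanSpace ℝ (Fin n)} (hq : U q ≠ 0) :
    dd (wv n j) (Qf U) q = Rf U j q := by
  rw [dd_Qf hUc _ hq, dd_gf_spatial hUc]
  simp only [Rf, show (wv n j).1 = 0 from rfl, show dd (wv n j) U = Vf U j from rfl]
  ring

theorem sym3 (hUc : ContDiff ℝ (⊤ : ℕ∞) U) (i j : Fin n) (q : ℝ × EuclideanSpace ℝ (Fin n)) :
    dd (wv n j) (Wf U j i) q = dd (wv n i) (Wf U j j) q := by
  rw [Wf_symm hUc j i]
  show dd (wv n j) (dd (wv n i) (Vf U j)) q = _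
  rw [dd_comm (Vf_contDiff hUc j).contDiffAt]
  rfl

theorem dd_Rf (hUc : ContDiff ℝ (⊤ : ℕ∞) U) (j : Fin n)
    {q : ℝ × EuclideanSpace ℝ (Fin n)} (hq : U q ≠ 0) :
    dd (wv n j) (Rf U j) q
      = q.1 * (-2 * dd (wv n j) (dd (wv n j) (Lf U)) q
        + ((∑ i, 2 * (Wf U j i q ^ 2 + Vf U i q * dd (wv n j) (Wf U j i) q)) * (U q)⁻¹
          + Af U j q * (-(U q ^ 2)⁻¹ * Vf U j q)
          + (Af U j q * (-(U q ^ 2)⁻¹ * Vf U j q)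
            + gf U q * (((U q ^ 2) ^ 2)⁻¹ * (2 * U q * Vf U j q) * Vf U j q
              + -(U q ^ 2)⁻¹ * Wf U j j q)))) := by
  have hU := hUc.differentiable (by simp)
  have hsq : DifferentiableAt ℝ (fun q => U q ^ 2) q := (hU q).pow 2
  have hsqne : U q ^ 2 ≠ 0 := pow_ne_zero 2 hq
  have hinvsq : DifferentiableAt ℝ (fun q => (U q ^ 2)⁻¹) q := hsq.inv hsqne
  have hL2 := (dd_contDiff (Lf_contDiff hUc) (w := wv n j)).differentiable (by simp)
  have hA := (Af_contDiff hUc j).differentiable (by simp)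
  have hg := (gf_contDiff hUc).differentiable (by simp)
  have hV := fun i => (Vf_contDiff hUc i).differentiable (by simp)
  have hW := fun i k => (Wf_contDiff hUc i k).differentiable (by simp)
  have hinv : DifferentiableAt ℝ (fun q => (U q)⁻¹) q := (hU q).inv hq
  have hterm3 : DifferentiableAt ℝ (fun q => -(U q ^ 2)⁻¹ * Vf U j q) q :=
    (hinvsq.neg).mul (hV j q)
  have hsum : DifferentiableAt ℝ
      (fun q => Af U j q * (U q)⁻¹ + gf U q * (-(U q ^ 2)⁻¹ * Vf U j q)) q :=
    ((hA q).mul hinv).add ((hg q).mul hterm3)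
  unfold Rf
  rw [dd_mul differentiableAt_fst (((hL2 q).const_mul (-2)).fun_add hsum), dd_fst,
    dd_add ((hL2 q).const_mul (-2)) hsum, dd_const_mul (hL2 q),
    dd_add ((hA q).fun_mul hinv) ((hg q).fun_mul hterm3),
    dd_mul (hA q) hinv, dd_mul (hg q) hterm3,
    dd_mul (φ := fun q => -(U q ^ 2)⁻¹) (hinvsq.neg) (hV j q), dd_neg, dd_inv hsq hsqne,
    dd_sq (hU q), dd_inv (hU q) hq, dd_Af hUc, dd_wv_U, dd_wv_Vf]
  have e1 : (wv n j).1 = 0 := rfl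
  rw [e1]
  have e2 : ∀ i, dd (wv n j) (Vf U i) q = Wf U j i q := fun i => rfl
  simp only [e2]
  have e3 : ∀ i, 2 * (Wf U j i q * Wf U j i q + Vf U i q * dd (wv n j) (Wf U j i) q)
      = 2 * (Wf U j i q ^ 2 + Vf U i q * dd (wv n j) (Wf U j i) q) := fun i => by ring
  simp only [e3, dd_gf_spatial hUc, show dd (wv n j) U = Vf U j from rfl]
  ring

end Comp2

section Heat
open Set Filter
variable {n : ℕ} {U : ℝ × EuclideanSpace ℝ (Fin n) → ℝ} {T : ℝ}

theorem heat_Vf (hUc : ContDiff ℝ (⊤ : ℕ∞) U)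
    (hheatF : ∀ q : ℝ × EuclideanSpace ℝ (Fin n), q.1 ∈ Ioo (0:ℝ) T → dd (ev n) U q = Lf U q)
    {p : ℝ × EuclideanSpace ℝ (Fin n)} (hp : p.1 ∈ Ioo (0:ℝ) T) (i : Fin n) :
    dd (ev n) (Vf U i) p = dd (wv n i) (Lf U) p := by
  have hΩ : IsOpen {q : ℝ × EuclideanSpace ℝ (Fin n) | q.1 ∈ Ioo (0:ℝ) T} :=
    isOpen_Ioo.preimage continuous_fst
  have h1 : dd (ev n) (Vf U i) p = dd (wv n i) (dd (ev n) U) p := dd_comm hUc.contDiffAt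
  rw [h1]
  exact dd_congr (Filter.eventuallyEq_of_mem (hΩ.mem_nhds hp) hheatF)

theorem heat_Wf (hUc : ContDiff ℝ (⊤ : ℕ∞) U)
    (hheatF : ∀ q : ℝ × EuclideanSpace ℝ (Fin n), q.1 ∈ Ioo (0:ℝ) T → dd (ev n) U q = Lf U q)
    {p : ℝ × EuclideanSpace ℝ (Fin n)} (hp : p.1 ∈ Ioo (0:ℝ) T) (i : Fin n) :
    dd (ev n) (Wf U i i) p = dd (wv n i) (dd (wv n i) (Lf U)) p := by
  have hΩ : IsOpen {q : ℝ × EuclideanSpace ℝ (Fin n) | q.1 ∈ Ioo (0:ℝ) T} :=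
    isOpen_Ioo.preimage continuous_fst
  have h1 : dd (ev n) (Wf U i i) p = dd (wv n i) (dd (ev n) (Vf U i)) p :=
    dd_comm (Vf_contDiff hUc i).contDiffAt
  rw [h1]
  exact dd_congr (Filter.eventuallyEq_of_mem (hΩ.mem_nhds hp)
    (fun q hq => heat_Vf hUc hheatF hq i))

end Heat

theorem algebra_main {n : ℕ} (t a : ℝ) (htne : t ≠ 0) (ha : a ≠ 0)
    (A : Fin n → ℝ) (B : Fin n → Fin n → ℝ) (Y : Fin n → Fin n → ℝ) (D : Fin n → ℝ) :
    (∑ j, t * (-2 * D j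
        + ((∑ i, 2 * (B j i ^ 2 + A i * Y i j)) * a⁻¹
          + (∑ i, 2 * A i * B j i) * (-(a ^ 2)⁻¹ * A j)
          + ((∑ i, 2 * A i * B j i) * (-(a ^ 2)⁻¹ * A j)
            + (∑ i, A i ^ 2) * (((a ^ 2) ^ 2)⁻¹ * (2 * a * A j) * A j
              + -(a ^ 2)⁻¹ * B j j)))))
      - (1 * (-2 * (∑ i, B i i) + (∑ i, A i ^ 2) * a⁻¹)
        + t * (-2 * (∑ i, D i) + ((∑ i, 2 * A i * (∑ j, Y i j)) * a⁻¹
            + (∑ i, A i ^ 2) * (-(a ^ 2)⁻¹ * (∑ i, B i i)))))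
    = 2 * t * a * (∑ i, ∑ j, (-(B i j * a⁻¹) + A i * A j * (a ^ 2)⁻¹
        - (if i = j then (1:ℝ) else 0) / (2 * t)) ^ 2)
      + a * ((∑ i, A i ^ 2) * (a ^ 2)⁻¹ - (n : ℝ) / (2 * t)) := by
  -- abbreviations
  have hsq : (a:ℝ) ^ 2 ≠ 0 := pow_ne_zero 2 ha
  -- normalize LHS sums
  have e1 : ∀ j, (∑ i, 2 * (B j i ^ 2 + A i * Y i j))
      = 2 * (∑ i, B j i ^ 2) + 2 * (∑ i, A i * Y i j) := by
    intro j
    rw [Finset.mul_sum, Finset.mul_sum, ← Finset.sum_add_distrib]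
    exact Finset.sum_congr rfl fun i _ => by ring
  have e2 : ∀ j, (∑ i, 2 * A i * B j i) = 2 * (∑ i, A i * B j i) := by
    intro j
    rw [Finset.mul_sum]
    exact Finset.sum_congr rfl fun i _ => by ring
  have e4 : (∑ i, 2 * A i * (∑ j, Y i j)) = 2 * (∑ i, ∑ j, A i * Y i j) := by
    rw [Finset.mul_sum]
    refine Finset.sum_congr rfl fun i _ => ?_
    rw [← Finset.mul_sum]
    ring
  -- expand the per-j LHS term
  have e6 : ∀ j, t * (-2 * D j
        + ((∑ i, 2 * (B j i ^ 2 + A i * Y i j)) * a⁻¹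
          + (∑ i, 2 * A i * B j i) * (-(a ^ 2)⁻¹ * A j)
          + ((∑ i, 2 * A i * B j i) * (-(a ^ 2)⁻¹ * A j)
            + (∑ i, A i ^ 2) * (((a ^ 2) ^ 2)⁻¹ * (2 * a * A j) * A j
              + -(a ^ 2)⁻¹ * B j j))))
      = (-2 * t) * D j + (2 * t * a⁻¹) * (∑ i, B j i ^ 2)
        + (2 * t * a⁻¹) * (∑ i, A i * Y i j)
        + (-4 * t * (a ^ 2)⁻¹) * (A j * (∑ i, A i * B j i))
        + (2 * t * a * ((a ^ 2) ^ 2)⁻¹ * (∑ i, A i ^ 2)) * (A j ^ 2)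
        + (-t * (a ^ 2)⁻¹ * (∑ i, A i ^ 2)) * (B j j) := by
    intro j
    rw [e1 j, e2 j]
    ring
  rw [Finset.sum_congr rfl fun j _ => e6 j, e4]
  repeat rw [Finset.sum_add_distrib]
  repeat rw [← Finset.mul_sum]
  -- swap the Y-sum
  rw [show (∑ j, ∑ i, A i * Y i j) = ∑ i, ∑ j, A i * Y i j from Finset.sum_comm]
  -- expand RHS squares
  have e5 : ∀ i j : Fin n, (-(B i j * a⁻¹) + A i * A j * (a ^ 2)⁻¹
        - (if i = j then (1:ℝ) else 0) / (2 * t)) ^ 2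
      = (B i j ^ 2) * (a⁻¹ * a⁻¹) + (A i * (A j * B i j)) * (-2 * a⁻¹ * (a ^ 2)⁻¹)
        + (A i ^ 2 * A j ^ 2) * ((a ^ 2)⁻¹ * (a ^ 2)⁻¹)
        + (if i = j then (B i i * a⁻¹) * t⁻¹ - (A i * A i * (a ^ 2)⁻¹) * t⁻¹
            + (4 * t ^ 2)⁻¹ else 0) := by
    intro i j
    by_cases h : i = j
    · subst h
      rw [if_pos rfl, if_pos rfl]
      field_simp
      ring
    · simp only [if_neg h]
      ring
  rw [Finset.sum_congr rfl fun i _ => Finset.sum_congr rfl fun j _ => e5 i j]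
  -- split RHS double sum
  have e7 : ∀ i : Fin n, (∑ j, if i = j then (B i i * a⁻¹) * t⁻¹
      - (A i * A i * (a ^ 2)⁻¹) * t⁻¹ + (4 * t ^ 2)⁻¹ else 0)
      = (B i i * a⁻¹) * t⁻¹ - (A i * A i * (a ^ 2)⁻¹) * t⁻¹ + (4 * t ^ 2)⁻¹ := by
    intro i
    rw [Finset.sum_ite_eq]
    simp
  have eInner : ∀ i : Fin n, (∑ j, ((B i j ^ 2) * (a⁻¹ * a⁻¹)
        + (A i * (A j * B i j)) * (-2 * a⁻¹ * (a ^ 2)⁻¹)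
        + (A i ^ 2 * A j ^ 2) * ((a ^ 2)⁻¹ * (a ^ 2)⁻¹)
        + (if i = j then (B i i * a⁻¹) * t⁻¹ - (A i * A i * (a ^ 2)⁻¹) * t⁻¹
            + (4 * t ^ 2)⁻¹ else 0)))
      = (∑ j, B i j ^ 2) * (a⁻¹ * a⁻¹)
        + (A i * ∑ j, A j * B i j) * (-2 * a⁻¹ * (a ^ 2)⁻¹)
        + (A i ^ 2 * ∑ j, A j ^ 2) * ((a ^ 2)⁻¹ * (a ^ 2)⁻¹)
        + ((B i i * a⁻¹) * t⁻¹ - (A i * A i * (a ^ 2)⁻¹) * t⁻¹ + (4 * t ^ 2)⁻¹) := by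
    intro i
    repeat rw [Finset.sum_add_distrib]
    rw [← Finset.sum_mul, ← Finset.sum_mul, ← Finset.sum_mul, ← Finset.mul_sum,
      ← Finset.mul_sum, e7 i]
  rw [Finset.sum_congr rfl fun i _ => eInner i]
  repeat rw [Finset.sum_add_distrib]
  rw [Finset.sum_sub_distrib]
  repeat rw [← Finset.sum_mul]
  rw [Finset.sum_const, Finset.card_univ, Fintype.card_fin, nsmul_eq_mul]
  rw [show (∑ i : Fin n, A i * A i) = ∑ i, A i ^ 2 from
    Finset.sum_congr rfl fun i _ => by ring]
  generalize (∑ i : Fin n, ∑ j : Fin n, B i j ^ 2) = S3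
  generalize (∑ i : Fin n, A i * ∑ j : Fin n, A j * B i j) = S4
  generalize (∑ i : Fin n, ∑ j : Fin n, A i * Y i j) = S5
  generalize (∑ i : Fin n, A i ^ 2) = S1
  generalize (∑ i : Fin n, B i i) = S2
  generalize (∑ i : Fin n, D i) = SD
  field_simp
  ring

open Set Filter in
theorem evolution_of_P (n : ℕ) (T : ℝ) (hT : 0 < T)
    (u : ℝ → EuclideanSpace ℝ (Fin n) → ℝ)
    (hu : ContDiff ℝ (⊤ : ℕ∞) (Function.uncurry u))
    (hupos : ∀ t ∈ Set.Ioo (0:ℝ) T, ∀ x, 0 < u t x)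
    (hheat : ∀ t ∈ Set.Ioo (0:ℝ) T, ∀ x, deriv (fun s => u s x) t = lap (u t) x)
    (f : ℝ → EuclideanSpace ℝ (Fin n) → ℝ)
    (hf : ∀ t x, f t x = -Real.log (u t x) - (n / 2) * Real.log (4 * Real.pi * t))
    (P : ℝ → EuclideanSpace ℝ (Fin n) → ℝ)
    (hP : ∀ t x, P t x = t * (2 * lap (f t) x - gradSq (f t) x) * u t x) :
    ∀ t ∈ Set.Ioo (0:ℝ) T, ∀ x,
      lap (P t) x - deriv (fun s => P s x) t
        = 2 * t * u t x *
            (∑ i, ∑ j, (pdi i (pdi j (f t)) x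
              - (if i = j then (1:ℝ) else 0) / (2 * t)) ^ 2)
          + u t x * (gradSq (f t) x - n / (2 * t)) := by
  intro t ht x
  set U := Function.uncurry u with hUdef
  have hUc : ContDiff ℝ (⊤ : ℕ∞) U := hu
  have hUd : Differentiable ℝ U := hUc.differentiable (by simp)
  have hVd : ∀ i, Differentiable ℝ (Vf U i) := fun i => (Vf_contDiff hUc i).differentiable (by simp)
  have hWd : ∀ i j, Differentiable ℝ (Wf U i j) :=
    fun i j => (Wf_contDiff hUc i j).differentiable (by simp)
  have hpos : ∀ q : ℝ × EuclideanSpace ℝ (Fin n), q.1 ∈ Set.Ioo (0:ℝ) T → 0 < U q := by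
    rintro ⟨s, y⟩ hs; exact hupos s hs y
  have hne : ∀ q : ℝ × EuclideanSpace ℝ (Fin n), q.1 ∈ Set.Ioo (0:ℝ) T → U q ≠ 0 :=
    fun q hq => (hpos q hq).ne'
  have hpu : ∀ (s : ℝ) y (i : Fin n), pdi i (u s) y = Vf U i (s, y) := by
    intro s y i
    exact curry_pdi (hUd (s, y)) i
  have hpu2 : ∀ (s : ℝ) y (i j : Fin n), pdi i (pdi j (u s)) y = Wf U i j (s, y) := by
    intro s y i j
    have h1 : pdi j (u s) = fun y' => Vf U j (s, y') := funext fun y' => hpu s y' j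
    rw [h1]
    exact curry_pdi ((hVd j) (s, y)) i
  have hlapu : ∀ (s : ℝ) y, lap (u s) y = Lf U (s, y) := by
    intro s y; unfold lap Lf
    exact Finset.sum_congr rfl fun i _ => hpu2 s y i i
  have hheatF : ∀ q : ℝ × EuclideanSpace ℝ (Fin n), q.1 ∈ Set.Ioo (0:ℝ) T →
      dd (ev n) U q = Lf U q := by
    rintro ⟨s, y⟩ hs
    have h2 : deriv (fun r => U (r, y)) s = dd (ev n) U (s, y) := curry_deriv (hUd (s, y))
    rw [← h2, show (fun r => U (r, y)) = (fun r => u r y) from rfl, hheat s hs y, hlapu]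
  have hpf : ∀ s ∈ Set.Ioo (0:ℝ) T, ∀ y (i : Fin n),
      pdi i (f s) y = -(Vf U i (s, y) * (U (s, y))⁻¹) := by
    intro s hs y i
    have hfs : f s = fun y' => -Real.log (U (s, y')) - ((n:ℝ) / 2) * Real.log (4 * Real.pi * s) :=
      funext fun y' => hf s y'
    rw [hfs]
    have hlogd : DifferentiableAt ℝ (fun q : ℝ × EuclideanSpace ℝ (Fin n) =>
        -Real.log (U q)) (s, y) := ((hUd (s, y)).log (hne (s, y) hs)).neg
    have hφd : DifferentiableAt ℝ (fun q : ℝ × EuclideanSpace ℝ (Fin n) =>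
        -Real.log (U q) - ((n:ℝ) / 2) * Real.log (4 * Real.pi * s)) (s, y) :=
      hlogd.sub_const _
    rw [curry_pdi hφd i,
      dd_sub (φ := fun q => -Real.log (U q))
        (ψ := fun _ => ((n:ℝ) / 2) * Real.log (4 * Real.pi * s)) hlogd
        (differentiableAt_const _),
      dd_neg (φ := fun q => Real.log (U q)), dd_log (hUd _) (hne _ hs), dd_const,
      show dd (((0:ℝ), EuclideanSpace.single i 1) : ℝ × EuclideanSpace ℝ (Fin n)) U (s, y)
        = Vf U i (s, y) from rfl]
    ring
  have hpf2 : ∀ s ∈ Set.Ioo (0:ℝ) T, ∀ y (i j : Fin n),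
      pdi i (pdi j (f s)) y = -(Wf U i j (s, y) * (U (s, y))⁻¹)
        + Vf U i (s, y) * Vf U j (s, y) * ((U (s, y)) ^ 2)⁻¹ := by
    intro s hs y i j
    have h1 : pdi j (f s) = fun y' => -(Vf U j (s, y') * (U (s, y'))⁻¹) :=
      funext fun y' => hpf s hs y' j
    rw [h1]
    have hψd : DifferentiableAt ℝ
        (fun q : ℝ × EuclideanSpace ℝ (Fin n) => -(Vf U j q * (U q)⁻¹)) (s, y) :=
      ((hVd j _).mul ((hUd _).inv (hne _ hs))).neg
    rw [curry_pdi hψd i, dd_neg (φ := fun q => Vf U j q * (U q)⁻¹),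
      dd_mul (ψ := fun q => (U q)⁻¹) (hVd j _) ((hUd _).inv (hne _ hs)), dd_inv (hUd _) (hne _ hs),
      show dd (((0:ℝ), EuclideanSpace.single i 1) : ℝ × EuclideanSpace ℝ (Fin n)) (Vf U j) (s, y)
        = Wf U i j (s, y) from rfl,
      show dd (((0:ℝ), EuclideanSpace.single i 1) : ℝ × EuclideanSpace ℝ (Fin n)) U (s, y)
        = Vf U i (s, y) from rfl]
    ring
  have hlapf : ∀ s ∈ Set.Ioo (0:ℝ) T, ∀ y,
      lap (f s) y = -(Lf U (s, y) * (U (s, y))⁻¹) + gf U (s, y) * ((U (s, y)) ^ 2)⁻¹ := by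
    intro s hs y
    calc lap (f s) y
        = ∑ i, (-Wf U i i (s, y) * (U (s, y))⁻¹ + Vf U i (s, y) ^ 2 * ((U (s, y)) ^ 2)⁻¹) :=
          Finset.sum_congr rfl fun i _ => by rw [hpf2 s hs y i i]; ring
      _ = (∑ i, -Wf U i i (s, y)) * (U (s, y))⁻¹
            + (∑ i, Vf U i (s, y) ^ 2) * ((U (s, y)) ^ 2)⁻¹ := by
          rw [Finset.sum_add_distrib, Finset.sum_mul, Finset.sum_mul]
      _ = -(Lf U (s, y) * (U (s, y))⁻¹) + gf U (s, y) * ((U (s, y)) ^ 2)⁻¹ := by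
          rw [Finset.sum_neg_distrib]
          unfold Lf gf
          ring
  have hgradf : ∀ s ∈ Set.Ioo (0:ℝ) T, ∀ y,
      gradSq (f s) y = gf U (s, y) * ((U (s, y)) ^ 2)⁻¹ := by
    intro s hs y
    calc gradSq (f s) y
        = ∑ i, Vf U i (s, y) ^ 2 * ((U (s, y)) ^ 2)⁻¹ := by
          unfold gradSq
          refine Finset.sum_congr rfl fun i _ => ?_
          rw [hpf s hs y i, ← inv_pow]
          ring
      _ = gf U (s, y) * ((U (s, y)) ^ 2)⁻¹ := by rw [← Finset.sum_mul]; rfl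
  have hPQ : ∀ s ∈ Set.Ioo (0:ℝ) T, ∀ y, P s y = Qf U (s, y) := by
    intro s hs y
    rw [hP, hlapf s hs y, hgradf s hs y]
    have h0 : U (s, y) ≠ 0 := hne _ hs
    have hu0 : u s y = U (s, y) := rfl
    rw [hu0]
    unfold Qf
    field_simp
    ring
  have hQdiff : ∀ q : ℝ × EuclideanSpace ℝ (Fin n), q.1 ∈ Set.Ioo (0:ℝ) T →
      DifferentiableAt ℝ (Qf U) q :=
    fun q hq => (Qf_contDiffAt hUc (hne q hq)).differentiableAt (by simp)
  have hPt : P t = fun y => Qf U (t, y) := funext fun y => hPQ t ht y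
  have hlapP : lap (P t) x = ∑ j, dd (wv n j) (dd (wv n j) (Qf U)) (t, x) := by
    unfold lap
    refine Finset.sum_congr rfl fun j _ => ?_
    have h1 : pdi j (P t) = fun y' => dd (wv n j) (Qf U) (t, y') := by
      funext y'
      rw [hPt]
      exact curry_pdi (hQdiff (t, y') ht) j
    rw [h1]
    exact curry_pdi ((dd_contDiffAt (Qf_contDiffAt hUc (hne (t, x) ht))).differentiableAt (by simp)) j
  have hderivP : deriv (fun s => P s x) t = dd (ev n) (Qf U) (t, x) := by
    have heq : (fun s => P s x) =ᶠ[nhds t] fun s => Qf U (s, x) :=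
      Filter.eventuallyEq_of_mem (isOpen_Ioo.mem_nhds ht) (fun s hs => hPQ s hs x)
    rw [heq.deriv_eq]
    exact curry_deriv (hQdiff (t, x) ht)
  have hopen : IsOpen {q : ℝ × EuclideanSpace ℝ (Fin n) | U q ≠ 0} :=
    IsOpen.preimage hUc.continuous isOpen_ne
  have hdd2 : ∀ j, dd (wv n j) (dd (wv n j) (Qf U)) (t, x) = dd (wv n j) (Rf U j) (t, x) :=
    fun j => dd_congr (Filter.eventuallyEq_of_mem (hopen.mem_nhds (hne (t, x) ht))
      (fun q hq => dd_Qf_spatial hUc j hq))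
  have htne : t ≠ 0 := ne_of_gt ht.1
  have hane : U (t, x) ≠ 0 := hne (t, x) ht
  have hTime : dd (ev n) (Qf U) (t, x)
      = 1 * (-2 * Lf U (t, x) + gf U (t, x) * (U (t, x))⁻¹)
        + t * (-2 * (∑ i, dd (wv n i) (dd (wv n i) (Lf U)) (t, x))
          + ((∑ i, 2 * Vf U i (t, x) * (∑ j, dd (wv n i) (Wf U j j) (t, x))) * (U (t, x))⁻¹
            + gf U (t, x) * (-(U (t, x) ^ 2)⁻¹ * Lf U (t, x)))) := by
    rw [dd_Qf hUc (ev n) hane, dd_Lf hUc (ev n), dd_gf hUc (ev n),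
      Finset.sum_congr rfl (fun i _ => heat_Wf hUc hheatF ht i),
      Finset.sum_congr rfl (fun i (_ : i ∈ Finset.univ) =>
        by rw [heat_Vf hUc hheatF ht i, dd_Lf hUc (wv n i)] :
        ∀ i ∈ Finset.univ, 2 * Vf U i (t, x) * dd (ev n) (Vf U i) (t, x)
          = 2 * Vf U i (t, x) * (∑ j, dd (wv n i) (Wf U j j) (t, x))),
      hheatF (t, x) ht]
    norm_num [ev]
  have hSpace : ∑ j, dd (wv n j) (dd (wv n j) (Qf U)) (t, x)
      = ∑ j, t * (-2 * dd (wv n j) (dd (wv n j) (Lf U)) (t, x)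
        + ((∑ i, 2 * (Wf U j i (t, x) ^ 2
              + Vf U i (t, x) * dd (wv n i) (Wf U j j) (t, x))) * (U (t, x))⁻¹
          + (∑ i, 2 * Vf U i (t, x) * Wf U j i (t, x)) * (-(U (t, x) ^ 2)⁻¹ * Vf U j (t, x))
          + ((∑ i, 2 * Vf U i (t, x) * Wf U j i (t, x)) * (-(U (t, x) ^ 2)⁻¹ * Vf U j (t, x))
            + gf U (t, x) * (((U (t, x) ^ 2) ^ 2)⁻¹ * (2 * U (t, x) * Vf U j (t, x)) * Vf U j (t, x)
              + -(U (t, x) ^ 2)⁻¹ * Wf U j j (t, x))))) := by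
    refine Finset.sum_congr rfl fun j _ => ?_
    rw [hdd2 j, dd_Rf hUc j hane]
    simp only [Af]
    rw [show (∑ i, 2 * (Wf U j i (t, x) ^ 2 + Vf U i (t, x) * dd (wv n j) (Wf U j i) (t, x)))
        = (∑ i, 2 * (Wf U j i (t, x) ^ 2 + Vf U i (t, x) * dd (wv n i) (Wf U j j) (t, x))) from
      Finset.sum_congr rfl fun i _ => by rw [sym3 hUc i j]]
  rw [hlapP, hderivP, hSpace, hTime, show u t x = U (t, x) from rfl, hgradf t ht x,
    Finset.sum_congr rfl (fun i (_ : i ∈ Finset.univ) =>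
      Finset.sum_congr rfl (fun j (_ : j ∈ Finset.univ) => by rw [hpf2 t ht x i j]))]
  simp only [gf, Lf]
  exact algebra_main t (U (t, x)) htne hane (fun i => Vf U i (t, x))
    (fun i j => Wf U i j (t, x)) (fun i j => dd (wv n i) (Wf U j j) (t, x))
    (fun j => dd (wv n j) (dd (wv n j) (Lf U)) (t, x))
end
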